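/- arXiv:2204.05048 — 3 statements merged into one kernel-verified Lean document; each statement's English description precedes it below -/
import Mathlib

section
/- Let B be an n×n complex matrix with Jordan–Chevalley decomposition B = B_ss + B_nil where B² is semisimple (diagonalizable). Then B_nil² = 0 and B_ss·B_nil = B_nil·B_ss = 0. -/
/-!
Expanding, `B² = s² + (2s + n)n`, where `s²` is semisimple and `(2s + n)n` is nilpotent and
commutes with it; since `B²` is semisimple, uniqueness of the Jordan–Chevalley decomposition
forces `(2s + n)n = 0`, i.e. `n² = t n` with `t = -2s`. Then `n^(k+1) = t^k n`, so `t^k n = 0`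
for large `k`. A semisimple `t` has `ker t^k = ker t`, hence `t n = 0`, which gives `s n = 0`
and `n² = 0`.
-/

namespace Module.End

section CommRing

variable {R M : Type*} [CommRing R] [AddCommGroup M] [Module R M] {f g : End R M}

lemma IsSemisimple.ker_pow_eq_ker (hf : f.IsSemisimple) {k : ℕ} (hk : k ≠ 0) :
    LinearMap.ker (f ^ k) = LinearMap.ker f := by
  have h := hf.isFinitelySemisimple.genEigenspace_eq_eigenspace 0 (k := k)
    (by simpa [pos_iff_ne_zero])
  simpa [genEigenspace_nat, eigenspace_zero] using h

lemma IsSemisimple.mul_eq_zero_of_pow_mul_eq_zero (hf : f.IsSemisimple) {k : ℕ}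
    (h : f ^ k * g = 0) : f * g = 0 := by
  rcases eq_or_ne k 0 with rfl | hk
  · rw [pow_zero, one_mul] at h
    rw [h, mul_zero]
  · ext x
    have hx : g x ∈ LinearMap.ker (f ^ k) := by
      simpa using LinearMap.congr_fun h x
    simpa [hf.ker_pow_eq_ker hk] using hx

lemma IsSemisimple.mul_eq_zero_of_mul_self_eq_mul (hf : f.IsSemisimple) (hg : IsNilpotent g)
    (h : g * g = f * g) : f * g = 0 := by
  obtain ⟨m, hm⟩ := hg
  have hpow : ∀ k : ℕ, g ^ (k + 1) = f ^ k * g := by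
    intro k
    induction k with
    | zero => simp
    | succ k ih => rw [pow_succ, ih, mul_assoc, h, ← mul_assoc, ← pow_succ]
  refine hf.mul_eq_zero_of_pow_mul_eq_zero (k := m) ?_
  rw [← hpow, pow_succ, hm, zero_mul]

end CommRing

lemma eq_zero_of_isSemisimple_add_of_isNilpotent {K M : Type*} [Field K] [PerfectField K]
    [AddCommGroup M] [Module K M] [FiniteDimensional K M] {a b : End K M}
    (hcomm : Commute a b) (ha : a.IsSemisimple) (hab : (a + b).IsSemisimple)
    (hb : IsNilpotent b) : b = 0 := by
  have hb_ss : b.IsSemisimple := by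
    simpa using hab.sub_of_commute ((Commute.refl a).add_left hcomm.symm) ha
  exact eq_zero_of_isNilpotent_isSemisimple hb hb_ss

end Module.End

/-- If `B = s + n` is the Jordan–Chevalley decomposition
(`s` semisimple, `n` nilpotent, `s` and `n` commute) of an operator whose
square `B²` is semisimple (diagonalizable), then `n² = 0` and `s·n = n·s = 0`. -/
theorem stmt1 {V : Type*} [AddCommGroup V] [Module ℂ V] [FiniteDimensional ℂ V]
    (s n : Module.End ℂ V) (hcomm : Commute s n) (hs : s.IsSemisimple)
    (hn : IsNilpotent n)
    (hsq : (((s + n) * (s + n)) : Module.End ℂ V).IsSemisimple) :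
    n * n = 0 ∧ s * n = 0 ∧ n * s = 0 := by
  have hexpand : (s + n) * (s + n) = s * s + ((2 : ℂ) • s + n) * n := by
    simp only [add_mul, mul_add, two_smul, hcomm.eq]
    abel
  have hcomm' : Commute s (((2 : ℂ) • s + n) * n) :=
    (((Commute.refl s).smul_right 2).add_right hcomm).mul_right hcomm
  have hzero : ((2 : ℂ) • s + n) * n = 0 :=
    Module.End.eq_zero_of_isSemisimple_add_of_isNilpotent (hcomm'.mul_left hcomm')
      (hs.mul_of_commute (Commute.refl s) hs) (hexpand ▸ hsq)
      (((hcomm.smul_left 2).add_left (Commute.refl n)).isNilpotent_mul_left hn)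
  have hsq_n : n * n = ((-2 : ℂ) • s) * n := by
    rw [add_mul, add_eq_zero_iff_neg_eq] at hzero
    rw [← hzero, neg_smul, neg_mul]
  have hsn : s * n = 0 := by
    have h := (Module.End.IsSemisimple_smul (-2 : ℂ) hs).mul_eq_zero_of_mul_self_eq_mul hn hsq_n
    rwa [smul_mul_assoc, smul_eq_zero, or_iff_right (by norm_num)] at h
  refine ⟨?_, hsn, ?_⟩
  · rw [hsq_n, smul_mul_assoc, hsn, smul_zero]
  · rw [← hcomm.eq, hsn]
end

section
/- Let V be a finite-dimensional vector space with two commuting linear operators x, y satisfying x² = y² = xy = yx = 0, and suppose xV ∩ yV = 0. Then dim ker(x+y)/im(x+y) = dim of the homology of the operator induced by x on ker(y)/im(y). More precisely, letting W = ker(y)/im(y) with the operator x̄ induced by x (which satisfies x̄² = 0), one has dim(ker(x+y)/im(x+y)) = dim(ker x̄ / im x̄). -/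
/-!
Write `K = ker x ⊓ ker y`. Because `xV ∩ yV = 0`, the kernel of `x + y` is exactly `K`, and a
class `[w] ∈ W` is killed by `x̄` iff `x w ∈ yV ∩ xV = 0`, so `ker x̄` is the image of `K` in
`W`; as `yV ≤ K`, it has dimension `dim K - rk y`. For any `f` with `f² = 0` on a space of
dimension `n`, rank-nullity gives `dim H(f) = 2 dim ker f - n`. Applied to `x + y` on `V` and to
`x̄` on `W`, of dimension `dim V - 2 rk y`, both homologies have dimension `2 dim K - dim V`.
-/

/-- The homology `ker f / im f` of an operator `f`. -/
abbrev homol {W : Type*} [AddCommGroup W] [Module ℂ W] (f : W →ₗ[ℂ] W) :=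
  ↥(LinearMap.ker f) ⧸ ((LinearMap.range f).comap (LinearMap.ker f).subtype)

open Module LinearMap Submodule

theorem Submodule.finrank_map_mkQ_add_finrank {K M : Type*} [DivisionRing K] [AddCommGroup M]
    [Module K M] {p S : Submodule K M} [FiniteDimensional K S] (hpS : p ≤ S) :
    finrank K (S.map p.mkQ) + finrank K p = finrank K S := by
  have h := (p.mkQ.domRestrict S).finrank_range_add_finrank_ker
  rwa [range_domRestrict, ker_domRestrict, ker_mkQ,
    (comapSubtypeEquivOfLe hpS).finrank_eq] at h

theorem LinearMap.ker_add_eq_inf_of_disjoint_range {R M N : Type*} [Ring R] [AddCommGroup M]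
    [Module R M] [AddCommGroup N] [Module R N] {x y : M →ₗ[R] N}
    (h : range x ⊓ range y = ⊥) : ker (x + y) = ker x ⊓ ker y := by
  ext v
  refine ⟨fun hv => ?_, fun ⟨hxv, hyv⟩ => by simp_all⟩
  have hxv : x v = 0 := by
    have : x v ∈ range x ⊓ range y :=
      ⟨mem_range_self x v, eq_neg_of_add_eq_zero_left hv ▸ neg_mem (mem_range_self y v)⟩
    rwa [h, mem_bot] at this
  exact ⟨hxv, by simpa [hxv] using hv⟩

section Homology

variable {W : Type*} [AddCommGroup W] [Module ℂ W] [FiniteDimensional ℂ W]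
  {f : Module.End ℂ W}

theorem finrank_homol_add_finrank_range (hf : f * f = 0) :
    finrank ℂ (homol f) + finrank ℂ (range f) = finrank ℂ (ker f) := by
  have h := (range f).comap (ker f).subtype |>.finrank_quotient_add_finrank
  rwa [(comapSubtypeEquivOfLe (range_le_ker_iff.mpr hf)).finrank_eq] at h

theorem finrank_homol_add_finrank_eq_two_mul_finrank_ker (hf : f * f = 0) :
    finrank ℂ (homol f) + finrank ℂ W = 2 * finrank ℂ (ker f) := by
  have := finrank_homol_add_finrank_range hf
  have := f.finrank_range_add_finrank_ker
  omega

theorem finrank_homol_add_two_mul_finrank_range (hf : f * f = 0) :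
    finrank ℂ (homol f) + 2 * finrank ℂ (range f) = finrank ℂ W := by
  have := finrank_homol_add_finrank_range hf
  have := f.finrank_range_add_finrank_ker
  omega

end Homology

section InducedOperator

variable {V : Type*} [AddCommGroup V] [Module ℂ V] {x y : Module.End ℂ V}
  {hker : ∀ w ∈ ker y, x w ∈ ker y} {xbar : Module.End ℂ (homol y)}

theorem induced_mul_self_eq_zero (hx : x * x = 0)
    (hbar : ∀ w : ker y,
      xbar (Submodule.Quotient.mk w) = Submodule.Quotient.mk ⟨x w, hker w w.2⟩) :
    xbar * xbar = 0 := by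
  ext w
  have hxx : x (x w) = 0 := congr($hx w)
  simp [hbar, hxx]

theorem ker_induced_eq_map_mkQ (hint : range x ⊓ range y = ⊥)
    (hbar : ∀ w : ker y,
      xbar (Submodule.Quotient.mk w) = Submodule.Quotient.mk ⟨x w, hker w w.2⟩) :
    ker xbar = ((ker x ⊓ ker y).comap (ker y).subtype).map
      ((range y).comap (ker y).subtype).mkQ := by
  ext q
  induction q using Submodule.Quotient.induction_on with
  | H w =>
    refine ⟨fun h => ?_, ?_⟩
    · have hxw : x w ∈ range x ⊓ range y := ⟨mem_range_self x w, by
        rwa [mem_ker, hbar, Submodule.Quotient.mk_eq_zero] at h⟩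
      rw [hint, mem_bot] at hxw
      exact ⟨w, ⟨hxw, w.2⟩, rfl⟩
    · rintro ⟨a, ⟨hxa, -⟩, ha⟩
      rw [← ha, mkQ_apply, mem_ker, hbar]
      simp [show x a = 0 from hxa]

theorem finrank_ker_induced_add_finrank_range [FiniteDimensional ℂ V] (hy : y * y = 0)
    (hxy : x * y = 0) (hint : range x ⊓ range y = ⊥)
    (hbar : ∀ w : ker y,
      xbar (Submodule.Quotient.mk w) = Submodule.Quotient.mk ⟨x w, hker w w.2⟩) :
    finrank ℂ (ker xbar) + finrank ℂ (range y) =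
      finrank ℂ (ker x ⊓ ker y : Submodule ℂ V) := by
  have hrange : range y ≤ ker x ⊓ ker y := by
    rw [le_inf_iff, range_le_ker_iff, range_le_ker_iff]
    exact ⟨hxy, hy⟩
  have h := finrank_map_mkQ_add_finrank (comap_mono (f := (ker y).subtype) hrange)
  rwa [← ker_induced_eq_map_mkQ hint hbar,
    (comapSubtypeEquivOfLe (range_le_ker_iff.mpr hy)).finrank_eq,
    (comapSubtypeEquivOfLe (inf_le_right : ker x ⊓ ker y ≤ ker y)).finrank_eq] at h

end InducedOperator

/-- let `x, y` be commuting operators on a finite-dimensional space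
with `x² = y² = xy = yx = 0` and `xV ∩ yV = 0`.  Then
`dim ker(x+y)/im(x+y) = dim ker x̄/im x̄`, where `x̄` is the operator induced by
`x` on `W = ker(y)/im(y)`. -/
theorem stmt11 {V : Type*} [AddCommGroup V] [Module ℂ V] [FiniteDimensional ℂ V]
    (x y : Module.End ℂ V) (hx : x * x = 0) (hy : y * y = 0)
    (hxy : x * y = 0) (hyx : y * x = 0)
    (hint : LinearMap.range x ⊓ LinearMap.range y = ⊥)
    (hker : ∀ w ∈ LinearMap.ker y, x w ∈ LinearMap.ker y)
    (xbar : Module.End ℂ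
      (↥(LinearMap.ker y) ⧸ ((LinearMap.range y).comap (LinearMap.ker y).subtype)))
    (hbar : ∀ w : LinearMap.ker y,
      xbar (Submodule.Quotient.mk w) =
        Submodule.Quotient.mk ⟨x w.1, hker w.1 w.2⟩) :
    Module.finrank ℂ (homol (x + y)) = Module.finrank ℂ (homol xbar) := by
  have hsq : (x + y) * (x + y) = 0 := by
    simp only [add_mul, mul_add, hx, hy, hxy, hyx, add_zero]
  have hsum_homol := finrank_homol_add_finrank_eq_two_mul_finrank_ker hsq
  have hsum_ker := (LinearEquiv.ofEq _ _ (ker_add_eq_inf_of_disjoint_range hint)).finrank_eq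
  have hbar_homol :=
    finrank_homol_add_finrank_eq_two_mul_finrank_ker (induced_mul_self_eq_zero hx hbar)
  have hy_homol := finrank_homol_add_two_mul_finrank_range hy
  have hbar_ker := finrank_ker_induced_add_finrank_range hy hxy hint hbar
  omega
end

section
/- Given a finite set X ⊆ ℕ_{>0} of ×-positions and a number r ≥ 0 of ∧-symbols at position 0, with all other positions empty, the greedy procedure (process × positions from rightmost to leftmost, connecting each × to the nearest empty position to its right not yet used; then connect each ∧ at 0 similarly) produces a collection of arcs (a,b) with a < b that are pairwise non-nested-crossing: for any two arcs (a,b), (a',b') with a < a', either b < a' or b' < b. In particular the resulting arcs are non-intersecting. -/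
/-- The smallest position `b > a` not occupied in `occ`. -/
def nextFree (occ : Finset ℕ) (a : ℕ) : ℕ :=
  Nat.find (show ∃ b, a < b ∧ b ∉ occ by
    refine ⟨occ.sup id + a + 1, by omega, fun hmem => ?_⟩
    have h2 := Finset.le_sup (f := id) hmem
    simp only [id_eq] at h2
    omega)

/-- The greedy arc construction: process the sources in the given order,
connecting each source `a` to the nearest position `b > a` that is neither a
symbol position nor already used as an endpoint. -/
def greedy : List ℕ → Finset ℕ → List (ℕ × ℕ)
  | [], _ => []
  | a :: rest, occ =>
      let b := nextFree occ a
      (a, b) :: greedy rest (insert b occ)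

lemma nextFree_ex (occ : Finset ℕ) (a : ℕ) : ∃ b, a < b ∧ b ∉ occ := by
  refine ⟨occ.sup id + a + 1, by omega, fun hmem => ?_⟩
  have h2 := Finset.le_sup (f := id) hmem
  simp only [id_eq] at h2
  omega

lemma nextFree_spec (occ : Finset ℕ) (a : ℕ) :
    a < nextFree occ a ∧ nextFree occ a ∉ occ :=
  Nat.find_spec (nextFree_ex occ a)

lemma nextFree_min (occ : Finset ℕ) (a : ℕ) {c : ℕ} (h : c < nextFree occ a) :
    ¬(a < c ∧ c ∉ occ) :=
  Nat.find_min (nextFree_ex occ a) h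

lemma greedy_src_mem : ∀ (L : List ℕ) (occ : Finset ℕ) (a b : ℕ),
    (a, b) ∈ greedy L occ → a ∈ L := by
  intro L
  induction L with
  | nil => intro occ a b h; simp [greedy] at h
  | cons h t ih =>
    intro occ a b hm
    simp only [greedy, List.mem_cons] at hm
    rcases hm with h1 | h1
    · simp only [Prod.mk.injEq] at h1
      exact List.mem_cons.2 (Or.inl h1.1)
    · exact List.mem_cons.2 (Or.inr (ih _ _ _ h1))

lemma greedy_lt_notMem : ∀ (L : List ℕ) (occ : Finset ℕ) (a b : ℕ),
    (a, b) ∈ greedy L occ → a < b ∧ b ∉ occ := by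
  intro L
  induction L with
  | nil => intro occ a b h; simp [greedy] at h
  | cons h t ih =>
    intro occ a b hm
    simp only [greedy, List.mem_cons] at hm
    rcases hm with h1 | h1
    · simp only [Prod.mk.injEq] at h1
      obtain ⟨rfl, rfl⟩ := h1
      exact nextFree_spec _ _
    · have := ih _ _ _ h1
      exact ⟨this.1, fun hb => this.2 (Finset.mem_insert_of_mem hb)⟩

lemma greedy_key : ∀ (L : List ℕ) (occ : Finset ℕ),
    L.Pairwise (· ≥ ·) → (∀ x ∈ L, 0 < x → x ∈ occ) →
    ∀ a b a' b' : ℕ, (a, b) ∈ greedy L occ → (a', b') ∈ greedy L occ → a < a' →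
      (b < a' ∨ b' < b) := by
  intro L
  induction L with
  | nil => intro occ _ _ a b a' b' h; simp [greedy] at h
  | cons h t ih =>
    intro occ hpw hpos a b a' b' hm hm' hlt
    simp only [greedy, List.mem_cons] at hm hm'
    rcases hm with h1 | h1 <;> rcases hm' with h2 | h2
    · simp only [Prod.mk.injEq] at h1 h2
      omega
    · -- (a,b) is the head, (a',b') in tail: a = h ≥ a', contradiction
      simp only [Prod.mk.injEq] at h1
      obtain ⟨rfl, rfl⟩ := h1
      have ha' : a' ∈ t := greedy_src_mem _ _ _ _ h2
      have := (List.pairwise_cons.1 hpw).1 a' ha'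
      omega
    · -- (a',b') is the head
      simp only [Prod.mk.injEq] at h2
      obtain ⟨rfl, rfl⟩ := h2
      have hb := greedy_lt_notMem _ _ _ _ h1
      have hbn : b ∉ occ := fun hc => hb.2 (Finset.mem_insert_of_mem hc)
      have hbne : b ≠ nextFree occ a' := fun hc => hb.2 (hc ▸ Finset.mem_insert_self _ _)
      by_contra hcon
      push_neg at hcon
      -- b ≥ a', b ≥ nextFree occ a', so a' ≤ b < nextFree occ a' is false... 
      have hb2 : b < nextFree occ a' := lt_of_le_of_ne (by omega) hbne
      -- b ≠ a' since a' ∈ occ (a' > 0) but b ∉ occ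
      have ha'occ : a' ∈ occ := hpos a' List.mem_cons_self (by omega)
      have hba' : a' < b := by
        rcases lt_or_eq_of_le hcon.1 with h' | h'
        · exact h'
        · exact absurd (h' ▸ ha'occ) hbn
      exact nextFree_min occ a' hb2 ⟨hba', hbn⟩
    · exact ih (insert (nextFree occ h) occ) (List.pairwise_cons.1 hpw).2
        (fun x hx hx0 => Finset.mem_insert_of_mem (hpos x (List.mem_cons_of_mem _ hx) hx0))
        a b a' b' h1 h2 hlt

/-- given a finite set `X ⊆ ℕ_{>0}` of `×`-positions and `r` symbols
`∧` at position `0`, the greedy right-to-left construction produces arcs that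
are pairwise non-crossing: for arcs `(a,b)`, `(a',b')` with `a < a'`, either
`b < a'` or `b' < b`. -/
theorem stmt16 (X : Finset ℕ) (hX : 0 ∉ X) (r : ℕ) (L : List ℕ)
    (hL : L = (X.sort (· ≤ ·)).reverse ++ List.replicate r 0) :
    ∀ a b a' b' : ℕ, (a, b) ∈ greedy L X → (a', b') ∈ greedy L X → a < a' →
      (b < a' ∨ b' < b) := by
  apply greedy_key
  · subst hL
    rw [List.pairwise_append]
    refine ⟨?_, ?_, ?_⟩
    · rw [List.pairwise_reverse]
      exact (X.pairwise_sort (· ≤ ·)).imp (fun h => h)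
    · exact List.pairwise_replicate.2 (Or.inr le_rfl)
    · intro x hx y hy
      have : y = 0 := List.eq_of_mem_replicate hy
      omega
  · intro x hx hx0
    subst hL
    rw [List.mem_append] at hx
    rcases hx with hx | hx
    · rw [List.mem_reverse, Finset.mem_sort] at hx
      exact hx
    · have := List.eq_of_mem_replicate hx
      omega
end
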